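/- The number of p-valent leaf-rooted plane trees with k leaves is zero unless k = (p-2)ℓ + 2 for some integer ℓ ≥ 1, and in that case it equals ((p-1)ℓ)! / (ℓ! · ((p-2)ℓ+1)!). -/

import Mathlib

/-!
Encode a plane tree by the preorder sequence of the numbers of children of its vertices (its
Łukasiewicz code). This is a bijection from plane trees onto the words `l` over `ℕ` with
`l.length = l.sum + 1` all of whose proper prefixes `u` satisfy `u.length ≤ u.sum`. The code of
a `p`-valent tree with `ℓ` internal vertices has length `N = (p - 1)ℓ + 1`, letters in
`{0, p - 1}`, and `ℓ` letters `p - 1`; its `(p - 2)ℓ + 1` zeros are the leaves. By the cycle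
lemma, each of the `N.choose ℓ` words of that shape has exactly one rotation with the prefix
property, so there are `N.choose ℓ / N = ((p - 1)ℓ)! / (ℓ! ((p - 2)ℓ + 1)!)` such trees.
-/

/-- Plane trees: an ordered (plane) rooted tree given by the list of subtrees. -/
inductive PlaneTree : Type
  | node : List PlaneTree → PlaneTree

namespace PlaneTree

mutual
/-- The number of leaves of a plane tree (a node with no children is a leaf). -/
  def leaves : PlaneTree → ℕ
    | .node [] => 1
    | .node (t :: ts) => leaves t + leavesList ts
  def leavesList : List PlaneTree → ℕ
    | [] => 0
    | t :: ts => leaves t + leavesList ts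
end

/-- A plane tree (viewed as hanging from a root leaf) is `p`-valent if every internal
vertex has degree `p`, i.e. every node has either no children (it is a leaf) or
exactly `p - 1` children. -/
inductive PValent (p : ℕ) : PlaneTree → Prop
  | mk (ts : List PlaneTree) (h : ts = [] ∨ ts.length = p - 1)
      (hc : ∀ t ∈ ts, PValent p t) : PValent p (.node ts)

end PlaneTree

/-- A `p`-valent leaf-rooted tree with `k` leaves: the marked root leaf is attached to a
tree whose root is an internal (non-leaf) vertex, all internal vertices have degree `p`,
and the total number of leaves (including the root leaf) is `k`. -/
def LeafRootedTrees (p k : ℕ) : Set PlaneTree :=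
  {t | PlaneTree.PValent p t ∧ (∃ ts, ts ≠ [] ∧ t = .node ts) ∧ PlaneTree.leaves t + 1 = k}

/-- `IsLukasiewicz j l`: `l` is the preorder sequence of numbers of children of a forest of `j`
plane trees. After reading `i` letters, `j + (l.take i).sum - i` subtrees remain to be read. -/
def IsLukasiewicz (j : ℕ) (l : List ℕ) : Prop :=
  (∀ i < l.length, i < j + (l.take i).sum) ∧ l.length = j + l.sum

theorem isLukasiewicz_zero_iff {l : List ℕ} : IsLukasiewicz 0 l ↔ l = [] := by
  refine ⟨fun ⟨h, _⟩ => ?_, by rintro rfl; simp [IsLukasiewicz]⟩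
  by_contra hne
  simpa using h 0 (List.length_pos_iff.2 hne)

theorem isLukasiewicz_one_cons_iff {a : ℕ} {l : List ℕ} :
    IsLukasiewicz 1 (a :: l) ↔ IsLukasiewicz a l := by
  simp only [IsLukasiewicz, List.length_cons, List.sum_cons]
  refine and_congr ⟨fun h i hi => ?_, fun h i hi => ?_⟩ (by omega)
  · have := h (i + 1) (by omega)
    simp only [List.take_succ_cons, List.sum_cons] at this
    omega
  · cases i with
    | zero => simp
    | succ i =>
      simp only [List.take_succ_cons, List.sum_cons]
      have := h i (by omega)
      omega

theorem IsLukasiewicz.append {a b : ℕ} {u v : List ℕ} (hu : IsLukasiewicz a u)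
    (hv : IsLukasiewicz b v) : IsLukasiewicz (a + b) (u ++ v) := by
  obtain ⟨hu, hu_len⟩ := hu
  obtain ⟨hv, hv_len⟩ := hv
  refine ⟨fun i hi => ?_, by simp only [List.length_append, List.sum_append]; omega⟩
  rw [List.take_append, List.sum_append]
  rcases lt_or_ge i u.length with h | h
  · rw [Nat.sub_eq_zero_of_le h.le, List.take_zero, List.sum_nil]
    have := hu i h
    omega
  · rw [List.take_of_length_le h]
    have := hv (i - u.length) (by rw [List.length_append] at hi; omega)
    omega

theorem IsLukasiewicz.exists_append {a b : ℕ} {l : List ℕ} (h : IsLukasiewicz (a + b) l) :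
    ∃ u v, l = u ++ v ∧ IsLukasiewicz a u ∧ IsLukasiewicz b v := by
  classical
  obtain ⟨hpre, hlen⟩ := h
  have hex : ∃ i, a + (l.take i).sum ≤ i := ⟨l.length, by rw [List.take_length]; omega⟩
  set i := Nat.find hex
  have hmin : ∀ i' < i, i' < a + (l.take i').sum := fun i' h => not_le.1 (Nat.find_min hex h)
  have hil : i ≤ l.length := Nat.find_min' hex (by rw [List.take_length]; omega)
  -- the number of pending subtrees drops by at most one per letter, so it hits `b` exactly
  have hi : i = a + (l.take i).sum := by
    have hspec : a + (l.take i).sum ≤ i := Nat.find_spec hex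
    rcases Nat.eq_zero_or_pos i with h0 | hpos
    · simp only [h0, List.take_zero, List.sum_nil] at hspec ⊢
      omega
    · have := hmin (i - 1) (by omega)
      have : (l.take (i - 1)).sum ≤ (l.take i).sum := List.monotone_sum_take l (Nat.sub_le i 1)
      omega
  refine ⟨l.take i, l.drop i, (List.take_append_drop i l).symm, ⟨fun i' hi' => ?_, ?_⟩,
    ⟨fun i' hi' => ?_, ?_⟩⟩
  · rw [List.length_take] at hi'
    rw [List.take_take, min_eq_left (by omega)]
    exact hmin i' (by omega)
  · simpa [hil] using hi
  · have := hpre (i + i') (by rw [List.length_drop] at hi'; omega)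
    rw [List.take_add, List.sum_append] at this
    omega
  · have := List.sum_take_add_sum_drop l i
    simp only [List.length_drop]
    omega

theorem sum_take_rotate_add (l : List ℕ) {i m : ℕ} (hi : i ≤ l.length) (hm : m ≤ l.length) :
    ((l.rotate i).take m).sum + ((l ++ l).take i).sum = ((l ++ l).take (i + m)).sum := by
  rw [List.take_add, List.sum_append, add_comm, List.drop_append_of_le_length hi,
    List.rotate_eq_drop_append_take hi, List.take_append_of_le_length hi, List.take_append,
    List.take_append, List.take_take,
    min_eq_left (by simp only [List.length_drop]; omega)]

theorem isLukasiewicz_rotate_iff {l : List ℕ} (hl : l.length = l.sum + 1) {i : ℕ}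
    (hi : i ≤ l.length) :
    IsLukasiewicz 1 (l.rotate i) ↔
      ∀ m < l.length, ((l ++ l).take i).sum + m ≤ ((l ++ l).take (i + m)).sum := by
  have hsum : (l.rotate i).sum = l.sum := (List.rotate_perm l i).sum_eq
  simp only [IsLukasiewicz, List.length_rotate, hsum]
  refine (and_iff_left (by omega)).trans (forall₂_congr fun m hm => ?_)
  have := sum_take_rotate_add l hi hm.le
  omega

theorem existsUnique_rotate_isLukasiewicz {l : List ℕ} (hl : l.length = l.sum + 1) :
    ∃! i, i < l.length ∧ IsLukasiewicz 1 (l.rotate i) := by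
  classical
  have hper : ∀ k ≤ l.length,
      ((l ++ l).take (l.length + k)).sum = l.sum + ((l ++ l).take k).sum := fun k hk => by
    rw [List.take_length_add_append, List.sum_append, List.take_append_of_le_length hk]
  -- rotating at `i` gives a Łukasiewicz word iff `i` is the first maximum of `k ↦ k - S k`,
  -- where `S k` is the sum of the first `k` letters of the cyclic word
  obtain ⟨i₀, hi₀, hmax, hfirst⟩ : ∃ i₀ < l.length,
      (∀ k < l.length, (k : ℤ) - ((l ++ l).take k).sum ≤ i₀ - ((l ++ l).take i₀).sum) ∧
      ∀ j < i₀, (j : ℤ) - ((l ++ l).take j).sum < i₀ - ((l ++ l).take i₀).sum := by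
    have hex : ∃ i, i < l.length ∧
        ∀ k < l.length, (k : ℤ) - ((l ++ l).take k).sum ≤ i - ((l ++ l).take i).sum := by
      obtain ⟨i, hi, hmax⟩ := Finset.exists_max_image (Finset.range l.length)
        (fun k => (k : ℤ) - ((l ++ l).take k).sum) ⟨0, Finset.mem_range.2 (by omega)⟩
      exact ⟨i, Finset.mem_range.1 hi, fun k hk => hmax k (Finset.mem_range.2 hk)⟩
    obtain ⟨hlt, hmax⟩ := Nat.find_spec hex
    refine ⟨Nat.find hex, hlt, hmax, fun j hj => ?_⟩
    obtain ⟨k, hk, hjk⟩ := not_forall₂.1 (not_and.1 (Nat.find_min hex hj) (by omega))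
    exact (not_le.1 hjk).trans_le (hmax k hk)
  have not_both : ∀ i i', i < i' → i' < l.length → IsLukasiewicz 1 (l.rotate i) →
      ¬ IsLukasiewicz 1 (l.rotate i') := by
    intro i i' hii' hi'N hi hi'
    have h1 := (isLukasiewicz_rotate_iff hl (by omega)).1 hi (i' - i) (by omega)
    have h2 := (isLukasiewicz_rotate_iff hl (by omega)).1 hi' (l.length + i - i') (by omega)
    rw [show i + (i' - i) = i' by omega] at h1
    rw [show i' + (l.length + i - i') = l.length + i by omega, hper i (by omega)] at h2
    omega
  have hgood : IsLukasiewicz 1 (l.rotate i₀) := by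
    refine (isLukasiewicz_rotate_iff hl hi₀.le).2 fun m hm => ?_
    rcases lt_or_ge (i₀ + m) l.length with h | h
    · have := hmax _ h
      omega
    · have := hfirst (i₀ + m - l.length) (by omega)
      have := hper (i₀ + m - l.length) (by omega)
      rw [show l.length + (i₀ + m - l.length) = i₀ + m by omega] at this
      omega
  refine ⟨i₀, ⟨hi₀, hgood⟩, fun i ⟨hi, hrot⟩ => ?_⟩
  rcases lt_trichotomy i i₀ with h | h | h
  · exact absurd hgood (not_both i i₀ h hi₀ hrot)
  · exact h
  · exact absurd hrot (not_both i₀ i h hi hgood)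

theorem List.rotate_rotate_of_add_eq_length {α : Type*} (l : List α) {a b : ℕ}
    (h : a + b = l.length) : (l.rotate a).rotate b = l := by
  rw [List.rotate_rotate, h, List.rotate_length]

theorem card_isLukasiewicz_mul {S : Set (List ℕ)} {N : ℕ} (hlen : ∀ l ∈ S, l.length = N)
    (hsum : ∀ l ∈ S, l.length = l.sum + 1) (hrot : ∀ l ∈ S, ∀ i, l.rotate i ∈ S) :
    Nat.card {l // l ∈ S ∧ IsLukasiewicz 1 l} * N = Nat.card S := by
  -- pairs `(l, i)` with `l.rotate i` Łukasiewicz project bijectively onto `S` by the cycle lemma,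
  -- and correspond to Łukasiewicz words of `S` with a rotation by undoing the rotation
  let P := {x : S × Fin N // IsLukasiewicz 1 (x.1.1.rotate x.2)}
  have e₁ : P ≃ S := by
    refine Equiv.ofBijective (fun x => x.1.1) ⟨fun x y hxy => ?_, fun l => ?_⟩
    · have hl := hsum _ x.1.1.2
      obtain ⟨⟨l, i⟩, hi⟩ := x
      obtain ⟨⟨l', i'⟩, hi'⟩ := y
      obtain rfl : l = l' := hxy
      have hN := hlen _ l.2
      obtain rfl : i = i' := Fin.ext <| (existsUnique_rotate_isLukasiewicz hl).unique
        ⟨hN ▸ i.2, hi⟩ ⟨hN ▸ i'.2, hi'⟩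
      rfl
    · obtain ⟨i, ⟨hi, hrot⟩, -⟩ := existsUnique_rotate_isLukasiewicz (hsum _ l.2)
      exact ⟨⟨(l, ⟨i, hlen _ l.2 ▸ hi⟩), hrot⟩, rfl⟩
  have e₂ : P ≃ {l // l ∈ S ∧ IsLukasiewicz 1 l} × Fin N :=
    { toFun x := (⟨x.1.1.1.rotate x.1.2, hrot _ x.1.1.2 _, x.2⟩, x.1.2)
      invFun y := ⟨(⟨y.1.1.rotate (N - y.2), hrot _ y.1.2.1 _⟩, y.2), by
        simpa only [List.rotate_rotate_of_add_eq_length y.1.1 (a := N - y.2) (b := y.2)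
          (by rw [hlen _ y.1.2.1]; omega)] using y.1.2.2⟩
      left_inv x := Subtype.ext <| Prod.ext (Subtype.ext <|
        List.rotate_rotate_of_add_eq_length x.1.1.1 (a := x.1.2) (b := N - x.1.2)
          (by rw [hlen _ x.1.1.2]; omega)) rfl
      right_inv y := Prod.ext (Subtype.ext <| List.rotate_rotate_of_add_eq_length y.1.1
        (a := N - y.2) (b := y.2) (by rw [hlen _ y.1.2.1]; omega)) rfl }
  rw [← Nat.card_congr e₁, Nat.card_congr e₂, Nat.card_prod,
    Nat.card_eq_fintype_card (α := Fin N), Fintype.card_fin]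

def binaryWords {α : Type*} [DecidableEq α] (a b : α) (N n : ℕ) : Set (List α) :=
  {l | l.length = N ∧ (∀ x ∈ l, x = a ∨ x = b) ∧ l.count b = n}

theorem rotate_mem_binaryWords {α : Type*} [DecidableEq α] {a b : α} {N n : ℕ} {l : List α}
    (hl : l ∈ binaryWords a b N n) (i : ℕ) : l.rotate i ∈ binaryWords a b N n :=
  ⟨by rw [List.length_rotate, hl.1], fun x hx => hl.2.1 x (List.mem_rotate.1 hx),
    by rw [(List.rotate_perm l i).count_eq, hl.2.2]⟩

theorem card_binaryWords {α : Type*} [DecidableEq α] {a b : α} (hab : a ≠ b) (N n : ℕ) :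
    Nat.card (binaryWords a b N n) = N.choose n := by
  let e :
      {v : List.Vector α N // (∀ x ∈ v.toList, x = a ∨ x = b) ∧ v.toList.count b = n} ≃
      {s : Finset (Fin N) // s.card = n} :=
    { toFun v := ⟨Finset.univ.filter (v.1.get · = b), by
        rw [Fin.card_filter_univ_eq_vector_get_eq_count]; exact v.2.2⟩
      invFun s := ⟨List.Vector.ofFn fun i => if i ∈ s.1 then b else a, by
        refine ⟨fun x hx => ?_, ?_⟩
        · obtain ⟨i, rfl⟩ := List.mem_ofFn.1 (by simpa using hx)
          split_ifs <;> simp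
        · rw [← Fin.card_filter_univ_eq_vector_get_eq_count]
          convert s.2 using 2
          ext i
          simp [hab]⟩
      left_inv v := by
        refine Subtype.ext (List.Vector.ext fun i => ?_)
        simp only [List.Vector.get_ofFn, Finset.mem_filter, Finset.mem_univ, true_and]
        split_ifs with h
        · exact h.symm
        · exact ((v.2.1 _ (List.Vector.get_mem i v.1)).resolve_right h).symm
      right_inv s := by
        ext i
        simp [hab] }
  calc Nat.card (binaryWords a b N n) = Nat.card {s : Finset (Fin N) // s.card = n} :=
        Nat.card_congr ((Equiv.subtypeSubtypeEquivSubtypeInter _ _).symm.trans e)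
    _ = N.choose n := by
      rw [Nat.card_eq_fintype_card, Fintype.card_finset_len, Fintype.card_fin]

theorem List.sum_eq_mul_count_of_forall_mem {q : ℕ} {l : List ℕ}
    (h : ∀ x ∈ l, x = 0 ∨ x = q) :
    l.sum = q * l.count q := by
  induction l with
  | nil => simp
  | cons x l ih =>
    rw [List.forall_mem_cons] at h
    rw [List.sum_cons, List.count_cons, ih h.2]
    by_cases hx : x = q
    · simp [hx, mul_add, add_comm]
    · obtain rfl := h.1.resolve_right hx
      simp [hx]

theorem List.length_eq_count_add_count_of_forall_mem {α : Type*} [DecidableEq α] {a b : α}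
    (hab : a ≠ b) {l : List α} (h : ∀ x ∈ l, x = a ∨ x = b) :
    l.length = l.count a + l.count b := by
  induction l with
  | nil => simp
  | cons x l ih =>
    rw [List.forall_mem_cons] at h
    rw [List.length_cons, List.count_cons, List.count_cons, ih h.2]
    rcases h.1 with rfl | rfl <;> simp [hab, hab.symm] <;> omega

theorem IsLukasiewicz.count_zero {q : ℕ} {l : List ℕ} (h : IsLukasiewicz 1 l)
    (hl : ∀ x ∈ l, x = 0 ∨ x = q + 1) : l.count 0 = q * l.count (q + 1) + 1 := by
  have hlen := h.2
  rw [List.length_eq_count_add_count_of_forall_mem (Nat.succ_ne_zero q).symm hl,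
    List.sum_eq_mul_count_of_forall_mem hl] at hlen
  linarith

theorem Nat.eq_factorial_div_of_mul_eq_choose {c m ℓ : ℕ}
    (h : c * (m + ℓ + 1) = (m + ℓ + 1).choose ℓ) :
    c = (m + ℓ).factorial / (ℓ.factorial * (m + 1).factorial) := by
  have hfac := Nat.choose_mul_factorial_mul_factorial (show ℓ ≤ m + ℓ + 1 by omega)
  rw [show m + ℓ + 1 - ℓ = m + 1 by omega, ← h, Nat.factorial_succ (m + ℓ)] at hfac
  refine (Nat.div_eq_of_eq_mul_left (by positivity) ?_).symm
  refine Nat.eq_of_mul_eq_mul_left (show 0 < m + ℓ + 1 by omega) ?_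
  rw [← hfac]
  ring

namespace PlaneTree

def arities : PlaneTree → List ℕ
  | node ts => ts.length :: ts.flatMap arities

theorem arities_node (ts : List PlaneTree) :
    arities (node ts) = ts.length :: ts.flatMap arities := by rw [arities]

mutual
theorem arities_append_inj : ∀ {t t' : PlaneTree} {r r' : List ℕ},
    arities t ++ r = arities t' ++ r' → t = t' ∧ r = r'
  | node ts, node ts', r, r', h => by
    rw [arities_node, arities_node, List.cons_append, List.cons_append, List.cons.injEq] at h
    obtain ⟨rfl, rfl⟩ := flatMap_arities_append_inj h.1 h.2
    exact ⟨rfl, rfl⟩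
theorem flatMap_arities_append_inj : ∀ {ts ts' : List PlaneTree} {r r' : List ℕ},
    ts.length = ts'.length → ts.flatMap arities ++ r = ts'.flatMap arities ++ r' →
      ts = ts' ∧ r = r'
  | [], [], _, _, _, h => ⟨rfl, h⟩
  | t :: ts, t' :: ts', r, r', hlen, h => by
    simp only [List.flatMap_cons, List.append_assoc] at h
    obtain ⟨rfl, h'⟩ := arities_append_inj h
    obtain ⟨rfl, rfl⟩ := flatMap_arities_append_inj (by simpa using hlen) h'
    exact ⟨rfl, rfl⟩
end

mutual
theorem leaves_eq_count_arities : ∀ t : PlaneTree, leaves t = (arities t).count 0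
  | node [] => by simp [leaves, arities_node]
  | node (t :: ts) => by
    rw [leaves, arities_node, List.count_cons, leaves_eq_count_arities t,
      leavesList_eq_count_flatMap_arities ts]
    simp
theorem leavesList_eq_count_flatMap_arities :
    ∀ ts : List PlaneTree, leavesList ts = (ts.flatMap arities).count 0
  | [] => by simp [leavesList]
  | t :: ts => by
    rw [leavesList, List.flatMap_cons, List.count_append, leaves_eq_count_arities t,
      leavesList_eq_count_flatMap_arities ts]
end

theorem pValent_node_iff {p : ℕ} {ts : List PlaneTree} :
    PValent p (node ts) ↔ (ts = [] ∨ ts.length = p - 1) ∧ ∀ t ∈ ts, PValent p t :=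
  ⟨fun ⟨_, h, hc⟩ => ⟨h, hc⟩, fun ⟨h, hc⟩ => ⟨ts, h, hc⟩⟩

theorem pValent_succ_iff_arities {q : ℕ} : ∀ {t : PlaneTree},
    PValent (q + 1) t ↔ ∀ a ∈ arities t, a = 0 ∨ a = q
  | node ts => by
    rw [pValent_node_iff, ← List.length_eq_zero_iff, Nat.add_sub_cancel, arities_node,
      List.forall_mem_cons, List.forall_mem_flatMap]
    exact and_congr_right fun _ => forall₂_congr fun t _ => pValent_succ_iff_arities

theorem arities_injective : Function.Injective arities := fun t t' h =>
  (arities_append_inj (r := []) (r' := []) (by rw [h])).1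

mutual
theorem isLukasiewicz_arities : ∀ t : PlaneTree, IsLukasiewicz 1 (arities t)
  | node ts => by
    rw [arities_node, isLukasiewicz_one_cons_iff]
    exact isLukasiewicz_flatMap_arities ts
theorem isLukasiewicz_flatMap_arities :
    ∀ ts : List PlaneTree, IsLukasiewicz ts.length (ts.flatMap arities)
  | [] => isLukasiewicz_zero_iff.2 rfl
  | t :: ts => by
    rw [List.flatMap_cons, List.length_cons, add_comm]
    exact (isLukasiewicz_arities t).append (isLukasiewicz_flatMap_arities ts)
end

theorem exists_flatMap_arities_eq {j : ℕ} {l : List ℕ} (h : IsLukasiewicz j l) :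
    ∃ ts : List PlaneTree, ts.length = j ∧ ts.flatMap arities = l := by
  induction hl : l.length using Nat.strong_induction_on generalizing j l with
  | _ n ih =>
  subst hl
  cases j with
  | zero => exact ⟨[], rfl, (isLukasiewicz_zero_iff.1 h).symm⟩
  | succ j =>
    rw [add_comm] at h
    obtain ⟨u, v, rfl, hu, hv⟩ := h.exists_append
    obtain _ | ⟨a, u⟩ := u
    · simp [IsLukasiewicz] at hu
    rw [isLukasiewicz_one_cons_iff] at hu
    obtain ⟨ts, rfl, hts⟩ := ih _ (by simp) hu rfl
    obtain ⟨ts', rfl, hts'⟩ := ih _ (by simp) hv rfl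
    exact ⟨node ts :: ts', rfl, by simp [arities_node, hts, hts']⟩

theorem exists_arities_eq {l : List ℕ} (h : IsLukasiewicz 1 l) : ∃ t, arities t = l := by
  obtain ⟨ts, hlen, rfl⟩ := exists_flatMap_arities_eq h
  obtain ⟨t, rfl⟩ := List.length_eq_one_iff.1 hlen
  exact ⟨t, by simp⟩

theorem mem_leafRootedTrees_iff {q k : ℕ} {t : PlaneTree} :
    t ∈ LeafRootedTrees (q + 2) k ↔ (∀ a ∈ arities t, a = 0 ∨ a = q + 1) ∧
      0 < (arities t).count (q + 1) ∧ (arities t).count 0 + 1 = k := by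
  rw [LeafRootedTrees, Set.mem_ofPred_eq, pValent_succ_iff_arities, leaves_eq_count_arities]
  refine and_congr_right fun hval => and_congr_left fun _ => ?_
  obtain ⟨ts⟩ := t
  rw [arities_node] at hval ⊢
  simp only [node.injEq, exists_eq_right']
  rcases List.forall_mem_cons.1 hval |>.1 with h | h
  · simp [List.length_eq_zero_iff.1 h]
  · simp [h, ← List.length_pos_iff]

theorem exists_eq_of_mem_leafRootedTrees {q k : ℕ} {t : PlaneTree}
    (ht : t ∈ LeafRootedTrees (q + 2) k) : ∃ c, 1 ≤ c ∧ k = q * c + 2 := by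
  obtain ⟨hval, hpos, hk⟩ := mem_leafRootedTrees_iff.1 ht
  have := (isLukasiewicz_arities t).count_zero hval
  exact ⟨_, hpos, by omega⟩

theorem image_arities_leafRootedTrees {q ℓ : ℕ} (hq : 1 ≤ q) (hℓ : 1 ≤ ℓ) :
    arities '' LeafRootedTrees (q + 2) (q * ℓ + 2) =
      {l | l ∈ binaryWords 0 (q + 1) ((q + 1) * ℓ + 1) ℓ ∧ IsLukasiewicz 1 l} := by
  ext l
  constructor
  · rintro ⟨t, ht, rfl⟩
    obtain ⟨hval, -, hk⟩ := mem_leafRootedTrees_iff.1 ht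
    have hluk := isLukasiewicz_arities t
    have h0 := hluk.count_zero hval
    have hc : (arities t).count (q + 1) = ℓ :=
      Nat.eq_of_mul_eq_mul_left (show 0 < q by omega) (by omega)
    refine ⟨⟨?_, hval, hc⟩, hluk⟩
    rw [List.length_eq_count_add_count_of_forall_mem (Nat.succ_ne_zero q).symm hval, h0, hc]
    ring
  · rintro ⟨⟨-, hval, hc⟩, hluk⟩
    obtain ⟨t, rfl⟩ := exists_arities_eq hluk
    have h0 := hluk.count_zero hval
    exact ⟨t, mem_leafRootedTrees_iff.2 ⟨hval, by omega, by rw [h0, hc]⟩, rfl⟩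

end PlaneTree

/-- The number of `p`-valent leaf-rooted plane trees with `k` leaves is zero unless
`k = (p-2)ℓ + 2` for some `ℓ ≥ 1`, in which case it is `((p-1)ℓ)! / (ℓ! ((p-2)ℓ+1)!)`. -/
theorem stmt0 (p : ℕ) (hp : 3 ≤ p) :
    (∀ k : ℕ, (∀ ℓ : ℕ, 1 ≤ ℓ → k ≠ (p - 2) * ℓ + 2) → Nat.card (LeafRootedTrees p k) = 0) ∧
    (∀ ℓ : ℕ, 1 ≤ ℓ →
      Nat.card (LeafRootedTrees p ((p - 2) * ℓ + 2))
        = ((p - 1) * ℓ).factorial / (ℓ.factorial * ((p - 2) * ℓ + 1).factorial)) := by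
  obtain ⟨q, rfl⟩ : ∃ q, p = q + 2 := ⟨p - 2, by omega⟩
  rw [show q + 2 - 2 = q by omega, show q + 2 - 1 = q + 1 by omega]
  refine ⟨fun k hk => ?_, fun ℓ hℓ => ?_⟩
  · have hempty : LeafRootedTrees (q + 2) k = ∅ := Set.eq_empty_of_forall_notMem fun t ht => by
      obtain ⟨c, hc, rfl⟩ := PlaneTree.exists_eq_of_mem_leafRootedTrees ht
      exact hk c hc rfl
    rw [hempty, Nat.card_of_isEmpty]
  · have hcount := card_isLukasiewicz_mul (S := binaryWords 0 (q + 1) ((q + 1) * ℓ + 1) ℓ)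
      (fun l hl => hl.1)
      (fun l hl => by rw [List.sum_eq_mul_count_of_forall_mem hl.2.1, hl.1, hl.2.2])
      (fun l hl => rotate_mem_binaryWords hl)
    rw [card_binaryWords (Nat.succ_ne_zero q).symm, add_one_mul] at hcount
    rw [← Nat.card_image_of_injective PlaneTree.arities_injective,
      PlaneTree.image_arities_leafRootedTrees (by omega) hℓ, add_one_mul]
    exact Nat.eq_factorial_div_of_mul_eq_choose hcount
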